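/- arXiv:2105.03737 — 7 statements merged into one kernel-verified Lean document; each statement's English description precedes it below -/
import Mathlib

section
/- Under No Anticipation and Parallel Trends, the population difference-in-differences estimand decomposes as the direct effect plus the difference of average spillover effects: E[Y_1^obs − Y_0^obs | D = 1] − E[Y_1^obs − Y_0^obs | D = 0] = τ_direct + τ_spill(1) − τ_spill(0). -/
open MeasureTheory

/-- Conditional mean of `X` given the event `A`: `E[X | A] = (1/P(A)) ∫_A X dP`. -/
noncomputable def condMean {Ω : Type*} [MeasurableSpace Ω] (P : Measure Ω)
    (A : Set Ω) (X : Ω → ℝ) : ℝ :=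
  (P A).toReal⁻¹ * ∫ ω in A, X ω ∂P

section Aux

variable {Ω : Type*} [MeasurableSpace Ω] {P : Measure Ω}

/-- If `f` and `g` are a.e. strongly measurable and agree pointwise on `s`
(possibly non-measurable), then they agree `P.restrict s`-a.e. -/
lemma ae_restrict_eq_of_eqOn {f g : Ω → ℝ}
    (hf : AEStronglyMeasurable f P) (hg : AEStronglyMeasurable g P)
    {s : Set Ω} (hfg : ∀ ω ∈ s, f ω = g ω) :
    f =ᵐ[P.restrict s] g := by
  obtain ⟨m, hm, hdm⟩ := hf.sub hg
  have hdm' : ∀ᵐ ω ∂P, f ω - g ω = m ω := hdm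
  set N := toMeasurable P {ω | ¬ f ω - g ω = m ω} with hNdef
  have hNnull : P N = 0 := by
    rw [hNdef, measure_toMeasurable]
    exact hdm'
  have hmeasm : MeasurableSet {ω | m ω = 0} :=
    hm.measurable (measurableSet_singleton (0 : ℝ))
  have hsub : s ⊆ {ω | m ω = 0} ∪ N := by
    intro ω hω
    by_cases hc : m ω = 0
    · exact Or.inl hc
    · refine Or.inr (subset_toMeasurable _ _ ?_)
      simp only [Set.mem_setOf_eq]
      intro hEq
      exact hc (by rw [← hEq, hfg ω hω, sub_self])
  have hkey : (P.restrict s) {ω | ¬ m ω = 0} = 0 := by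
    have h1 : (P.restrict s) {ω | ¬ m ω = 0}
        ≤ (P.restrict ({ω | m ω = 0} ∪ N)) {ω | ¬ m ω = 0} :=
      Measure.restrict_mono hsub le_rfl _
    have h2 : (P.restrict ({ω | m ω = 0} ∪ N)) {ω | ¬ m ω = 0}
        = P ({ω | ¬ m ω = 0} ∩ ({ω | m ω = 0} ∪ N)) :=
      Measure.restrict_apply hmeasm.compl
    have h3 : P ({ω | ¬ m ω = 0} ∩ ({ω | m ω = 0} ∪ N)) ≤ P N := by
      apply measure_mono
      intro ω hω
      rcases hω.2 with hω2 | hω2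
      · exact absurd hω2 hω.1
      · exact hω2
    simpa using (h1.trans (h2 ▸ h3)).trans_eq hNnull
  have hm0 : m =ᵐ[P.restrict s] (fun _ => (0 : ℝ)) := hkey
  have hdm2 : ∀ᵐ ω ∂(P.restrict s), f ω - g ω = m ω :=
    ae_restrict_of_ae hdm'
  filter_upwards [hm0, hdm2] with ω h1 h2
  have : f ω - g ω = 0 := by rw [h2, h1]
  linarith

lemma condMean_congr_eqOn {f g : Ω → ℝ}
    (hf : AEStronglyMeasurable f P) (hg : AEStronglyMeasurable g P)
    {s : Set Ω} (hfg : ∀ ω ∈ s, f ω = g ω) :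
    condMean P s f = condMean P s g := by
  unfold condMean
  rw [integral_congr_ae (ae_restrict_eq_of_eqOn hf hg hfg)]

lemma condMean_sub {f g : Ω → ℝ} {s : Set Ω}
    (hf : IntegrableOn f s P) (hg : IntegrableOn g s P) :
    condMean P s (fun ω => f ω - g ω) = condMean P s f - condMean P s g := by
  unfold condMean
  rw [integral_sub hf hg, mul_sub]

end Aux

/-- Decomposition of the difference-in-differences estimand:
`DiD = τ_direct + τ_spill(1) − τ_spill(0)`. -/
theorem did_decomposition_direct_plus_spillovers
    {Ω : Type*} [MeasurableSpace Ω] (P : Measure Ω) [IsProbabilityMeasure P]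
    {H : Type*} [Zero H]
    (D : Ω → Fin 2) (h : Ω → H)
    (Y : Fin 2 → Fin 2 → H → Ω → ℝ)
    (hD1 : 0 < P {ω | D ω = 1}) (hD0 : 0 < P {ω | D ω = 0})
    -- integrability of all random variables appearing in the stated expectations
    (hIntArm : ∀ (t d : Fin 2) (e : H), Integrable (Y t d e) P)
    (hIntObs : ∀ t : Fin 2, Integrable (fun ω => Y t (D ω) (h ω) ω) P)
    (hIntExp : ∀ d : Fin 2, Integrable (fun ω => Y 1 d (h ω) ω) P)
    -- No Anticipation
    (hNoAnt : ∀ (d : Fin 2) (e : H) (ω : Ω), Y 0 d e ω = Y 0 0 0 ω)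
    -- Parallel Trends
    (hPT : condMean P {ω | D ω = 1} (fun ω => Y 1 0 0 ω - Y 0 0 0 ω)
         = condMean P {ω | D ω = 0} (fun ω => Y 1 0 0 ω - Y 0 0 0 ω)) :
    condMean P {ω | D ω = 1} (fun ω => Y 1 (D ω) (h ω) ω - Y 0 (D ω) (h ω) ω)
      - condMean P {ω | D ω = 0} (fun ω => Y 1 (D ω) (h ω) ω - Y 0 (D ω) (h ω) ω)
    = condMean P {ω | D ω = 1} (fun ω => Y 1 1 0 ω - Y 1 0 0 ω)
      + condMean P {ω | D ω = 1} (fun ω => Y 1 1 (h ω) ω - Y 1 1 0 ω)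
      - condMean P {ω | D ω = 0} (fun ω => Y 1 0 (h ω) ω - Y 1 0 0 ω) := by
  set A := {ω | D ω = 1} with hA
  set B := {ω | D ω = 0} with hB
  have hObsSub : AEStronglyMeasurable
      (fun ω => Y 1 (D ω) (h ω) ω - Y 0 (D ω) (h ω) ω) P :=
    ((hIntObs 1).sub (hIntObs 0)).aestronglyMeasurable
  -- replace the observed-outcome integrands on each conditioning event
  have eq1 : condMean P A (fun ω => Y 1 (D ω) (h ω) ω - Y 0 (D ω) (h ω) ω)
      = condMean P A (fun ω => Y 1 1 (h ω) ω - Y 0 0 0 ω) := by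
    refine condMean_congr_eqOn hObsSub
      ((hIntExp 1).sub (hIntArm 0 0 0)).aestronglyMeasurable ?_
    intro ω hω
    have hDω : D ω = 1 := hω
    rw [hDω, hNoAnt 1 (h ω) ω]
    simp
  have eq0 : condMean P B (fun ω => Y 1 (D ω) (h ω) ω - Y 0 (D ω) (h ω) ω)
      = condMean P B (fun ω => Y 1 0 (h ω) ω - Y 0 0 0 ω) := by
    refine condMean_congr_eqOn hObsSub
      ((hIntExp 0).sub (hIntArm 0 0 0)).aestronglyMeasurable ?_
    intro ω hω
    have hDω : D ω = 0 := hω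
    rw [hDω, hNoAnt 0 (h ω) ω]
    simp
  rw [eq1, eq0]
  -- integrability on the conditioning events
  have i11h_A : IntegrableOn (fun ω => Y 1 1 (h ω) ω) A P := (hIntExp 1).integrableOn
  have i10h_A : IntegrableOn (fun ω => Y 1 0 (h ω) ω) A P := (hIntExp 0).integrableOn
  have i10h_B : IntegrableOn (fun ω => Y 1 0 (h ω) ω) B P := (hIntExp 0).integrableOn
  have i000_A : IntegrableOn (Y 0 0 0) A P := (hIntArm 0 0 0).integrableOn
  have i000_B : IntegrableOn (Y 0 0 0) B P := (hIntArm 0 0 0).integrableOn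
  have i100_A : IntegrableOn (Y 1 0 0) A P := (hIntArm 1 0 0).integrableOn
  have i100_B : IntegrableOn (Y 1 0 0) B P := (hIntArm 1 0 0).integrableOn
  have i110_A : IntegrableOn (Y 1 1 0) A P := (hIntArm 1 1 0).integrableOn
  -- split everything into condMeans of single functions
  rw [condMean_sub i11h_A i000_A, condMean_sub i10h_B i000_B,
    condMean_sub i110_A i100_A, condMean_sub i11h_A i110_A,
    condMean_sub i10h_B i100_B]
  have hPT' : condMean P A (Y 1 0 0) - condMean P A (Y 0 0 0)
      = condMean P B (Y 1 0 0) - condMean P B (Y 0 0 0) := by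
    have := hPT
    rw [condMean_sub i100_A i000_A, condMean_sub i100_B i000_B] at this
    exact this
  linarith
end

section
/- Under No Anticipation and Parallel Trends, the population difference-in-differences estimand equals the total effect minus the average spillover effect on control units: E[Y_1^obs − Y_0^obs | D = 1] − E[Y_1^obs − Y_0^obs | D = 0] = τ_total − τ_spill(0). -/
open MeasureTheory

lemma setIntegral_zero_of_eqOn_zero {Ω : Type*} [MeasurableSpace Ω] {P : Measure Ω}
    {A : Set Ω} {f : Ω → ℝ} (hf : Integrable f P) (h0 : ∀ ω ∈ A, f ω = 0) :
    ∫ ω in A, f ω ∂P = 0 := by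
  have hm := hf.aestronglyMeasurable
  set ψ := hm.mk f with hψ
  have hfψ : f =ᵐ[P] ψ := hm.ae_eq_mk
  have hres : f =ᵐ[P.restrict A] ψ := ae_mono Measure.restrict_le_self hfψ
  have hSmeas : MeasurableSet {ω | ψ ω ≠ 0} :=
    (hm.stronglyMeasurable_mk.measurable (measurableSet_singleton 0)).compl
  have hnull : P.restrict A {ω | ψ ω ≠ 0} = 0 := by
    rw [Measure.restrict_apply hSmeas]
    refine measure_mono_null ?_ (ae_iff.mp hfψ)
    intro ω ⟨hψne, hA⟩
    simp only [Set.mem_setOf_eq]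
    intro hfe
    exact hψne (hfe ▸ (h0 ω hA).symm ▸ (h0 ω hA) ▸ rfl)
  have hψ0 : ψ =ᵐ[P.restrict A] 0 := by
    rw [Filter.EventuallyEq, ae_iff]
    exact measure_mono_null (fun ω hω => hω) hnull
  calc ∫ ω in A, f ω ∂P = ∫ ω in A, ψ ω ∂P := integral_congr_ae hres
    _ = 0 := by simp [integral_congr_ae hψ0]

lemma setIntegral_congr_of_eqOn' {Ω : Type*} [MeasurableSpace Ω] {P : Measure Ω}
    {A : Set Ω} {f g : Ω → ℝ} (hf : Integrable f P) (hg : Integrable g P)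
    (hfg : ∀ ω ∈ A, f ω = g ω) :
    ∫ ω in A, f ω ∂P = ∫ ω in A, g ω ∂P := by
  have := setIntegral_zero_of_eqOn_zero (A := A) (f := fun ω => f ω - g ω) (hf.sub hg) (fun ω hω => by simp [hfg ω hω])
  rw [integral_sub hf.restrict hg.restrict] at this
  linarith

/-- Decomposition of the difference-in-differences estimand:
`DiD = τ_total − τ_spill(0)`. -/
theorem did_equals_total_minus_control_spillover
    {Ω : Type*} [MeasurableSpace Ω] (P : Measure Ω) [IsProbabilityMeasure P]
    {H : Type*} [Zero H]
    (D : Ω → Fin 2) (h : Ω → H)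
    (Y : Fin 2 → Fin 2 → H → Ω → ℝ)
    (hD1 : 0 < P {ω | D ω = 1}) (hD0 : 0 < P {ω | D ω = 0})
    -- integrability of all random variables appearing in the stated expectations
    (hIntArm : ∀ (t d : Fin 2) (e : H), Integrable (Y t d e) P)
    (hIntObs : ∀ t : Fin 2, Integrable (fun ω => Y t (D ω) (h ω) ω) P)
    (hIntExp : ∀ d : Fin 2, Integrable (fun ω => Y 1 d (h ω) ω) P)
    -- No Anticipation
    (hNoAnt : ∀ (d : Fin 2) (e : H) (ω : Ω), Y 0 d e ω = Y 0 0 0 ω)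
    -- Parallel Trends
    (hPT : condMean P {ω | D ω = 1} (fun ω => Y 1 0 0 ω - Y 0 0 0 ω)
         = condMean P {ω | D ω = 0} (fun ω => Y 1 0 0 ω - Y 0 0 0 ω)) :
    condMean P {ω | D ω = 1} (fun ω => Y 1 (D ω) (h ω) ω - Y 0 (D ω) (h ω) ω)
      - condMean P {ω | D ω = 0} (fun ω => Y 1 (D ω) (h ω) ω - Y 0 (D ω) (h ω) ω)
    = condMean P {ω | D ω = 1} (fun ω => Y 1 1 (h ω) ω - Y 1 0 0 ω)
      - condMean P {ω | D ω = 0} (fun ω => Y 1 0 (h ω) ω - Y 1 0 0 ω) := by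
  set A1 := {ω | D ω = 1} with hA1
  set A0 := {ω | D ω = 0} with hA0
  have hObsInt : Integrable (fun ω => Y 1 (D ω) (h ω) ω - Y 0 (D ω) (h ω) ω) P :=
    (hIntObs 1).sub (hIntObs 0)
  have hInt1 : Integrable (fun ω => Y 1 1 (h ω) ω - Y 0 0 0 ω) P :=
    (hIntExp 1).sub (hIntArm 0 0 0)
  have hInt0 : Integrable (fun ω => Y 1 0 (h ω) ω - Y 0 0 0 ω) P :=
    (hIntExp 0).sub (hIntArm 0 0 0)
  have e1 : ∫ ω in A1, (Y 1 (D ω) (h ω) ω - Y 0 (D ω) (h ω) ω) ∂P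
      = ∫ ω in A1, (Y 1 1 (h ω) ω - Y 0 0 0 ω) ∂P := by
    refine setIntegral_congr_of_eqOn' hObsInt hInt1 (fun ω hω => ?_)
    have hd : D ω = 1 := hω
    rw [hd, hNoAnt 1 (h ω) ω]
  have e0 : ∫ ω in A0, (Y 1 (D ω) (h ω) ω - Y 0 (D ω) (h ω) ω) ∂P
      = ∫ ω in A0, (Y 1 0 (h ω) ω - Y 0 0 0 ω) ∂P := by
    refine setIntegral_congr_of_eqOn' hObsInt hInt0 (fun ω hω => ?_)
    have hd : D ω = 0 := hω
    rw [hd, hNoAnt 0 (h ω) ω]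
  simp only [condMean] at hPT ⊢
  rw [e1, e0]
  rw [integral_sub (hIntExp 1).restrict (hIntArm 0 0 0).restrict,
      integral_sub (hIntExp 0).restrict (hIntArm 0 0 0).restrict,
      integral_sub (hIntExp 1).restrict (hIntArm 1 0 0).restrict,
      integral_sub (hIntExp 0).restrict (hIntArm 1 0 0).restrict]
  rw [integral_sub (hIntArm 1 0 0).restrict (hIntArm 0 0 0).restrict,
      integral_sub (hIntArm 1 0 0).restrict (hIntArm 0 0 0).restrict] at hPT
  ring_nf at hPT ⊢
  linarith
end

section
/- Identification of the Total Effect: suppose S : Ω → {0,1} is a measurable spillover-region indicator satisfying locality (S(ω) = 0 implies h(ω) = 0), with P(D=0, S=0) > 0. If No Anticipation and Cell Parallel Trends hold, then E[Y_1^obs − Y_0^obs | D=1] − E[Y_1^obs − Y_0^obs | D=0, S=0] = τ_total. -/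
/-!
On the control cell `{D = 0, S = 0}` locality forces `h = 0`, so the observed change is the
untreated trend `Y 1 0 0 - Y 0 0 0`, whose mean there is the population trend by parallel
trends. On the treated group, no anticipation splits the observed change into the total effect
plus the untreated trend, and the mean of that trend over `{D = 1}` is again the population
trend: by parallel trends it is so on each cell `{D = 1, S = s}`, and the mean over a set
partitioned by a measurable `S` is the weighted average of the cell means.
-/

open MeasureTheory Set

section

variable {Ω : Type*} [MeasurableSpace Ω] {μ : Measure Ω} {A : Set Ω}

/-- Since `A` need not be measurable, pointwise equality on `A` passes to `μ.restrict A`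
only through measurable versions of `f` and `g`. -/
theorem ae_restrict_eq_of_eqOn_s4 {E : Type*} [TopologicalSpace E]
    [TopologicalSpace.MetrizableSpace E] {f g : Ω → E}
    (hf : AEStronglyMeasurable f (μ.restrict A)) (hg : AEStronglyMeasurable g (μ.restrict A))
    (hfg : EqOn f g A) : f =ᵐ[μ.restrict A] g := by
  have hnull : μ.restrict A {x | ¬(f x = hf.mk f x ∧ g x = hg.mk g x)} = 0 :=
    ae_iff.1 (hf.ae_eq_mk.and hg.ae_eq_mk)
  have hmk : hf.mk f =ᵐ[μ.restrict A] hg.mk g := by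
    rw [Filter.EventuallyEq, ae_iff]
    change μ.restrict A {x | hf.mk f x = hg.mk g x}ᶜ = 0
    rw [Measure.restrict_apply
      (hf.stronglyMeasurable_mk.measurableSet_eq_fun hg.stronglyMeasurable_mk).compl]
    refine measure_mono_null ?_
      (nonpos_iff_eq_zero.1 ((Measure.le_restrict_apply _ _).trans hnull.le))
    rintro x ⟨hne, hx⟩
    refine ⟨fun ⟨hfx, hgx⟩ => hne ?_, hx⟩
    exact hfx.symm.trans ((hfg hx).trans hgx)
  exact hf.ae_eq_mk.trans (hmk.trans hg.ae_eq_mk.symm)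

theorem condMean_congr {f g : Ω → ℝ} (hf : AEStronglyMeasurable f (μ.restrict A))
    (hg : AEStronglyMeasurable g (μ.restrict A)) (hfg : EqOn f g A) :
    condMean μ A f = condMean μ A g := by
  rw [condMean, condMean, integral_congr_ae (ae_restrict_eq_of_eqOn_s4 hf hg hfg)]

theorem condMean_add {f g : Ω → ℝ} (hf : IntegrableOn f A μ) (hg : IntegrableOn g A μ) :
    condMean μ A (fun ω => f ω + g ω) = condMean μ A f + condMean μ A g := by
  rw [condMean, condMean, condMean, integral_add hf hg, mul_add]

theorem setIntegral_eq_measureReal_mul_of_condMean_eq [IsFiniteMeasure μ] {f : Ω → ℝ} {c : ℝ}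
    (h : μ A ≠ 0 → condMean μ A f = c) : ∫ ω in A, f ω ∂μ = μ.real A * c := by
  by_cases hA : μ A = 0
  · simp [Measure.restrict_eq_zero.2 hA, measureReal_def, hA]
  · rw [← h hA, condMean, ← measureReal_def, ← mul_assoc,
      mul_inv_cancel₀ ((measureReal_ne_zero_iff).2 hA), one_mul]

variable {ι : Type*} [Fintype ι] [MeasurableSpace ι] [MeasurableSingletonClass ι] {S : Ω → ι}

theorem setIntegral_eq_sum_inter_preimage {E : Type*} [NormedAddCommGroup E] [NormedSpace ℝ E]
    (hS : Measurable S) {f : Ω → E}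
    (hf : IntegrableOn f A μ) : ∫ ω in A, f ω ∂μ = ∑ i, ∫ ω in A ∩ S ⁻¹' {i}, f ω ∂μ := by
  have hfiber : ∀ i, MeasurableSet (S ⁻¹' {i}) := fun i => hS (measurableSet_singleton i)
  have hcover : ⋃ i, S ⁻¹' {i} = univ := by ext ω; simp
  rw [← setIntegral_univ, ← hcover, integral_iUnion_fintype hfiber (pairwise_disjoint_fiber S)
    fun _ => Integrable.integrableOn hf]
  simp only [Measure.restrict_restrict (hfiber _), inter_comm]

theorem measureReal_eq_sum_inter_preimage [IsFiniteMeasure μ] (hS : Measurable S) :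
    μ.real A = ∑ i, μ.real (A ∩ S ⁻¹' {i}) := by
  simpa using setIntegral_eq_sum_inter_preimage (μ := μ) (A := A) hS (f := fun _ => (1 : ℝ))
    (integrableOn_const (measure_ne_top _ _))

theorem condMean_eq_of_forall_condMean_inter_preimage_eq [IsFiniteMeasure μ] (hS : Measurable S)
    (hA : μ A ≠ 0) {f : Ω → ℝ} (hf : IntegrableOn f A μ) {c : ℝ}
    (hcell : ∀ i, μ (A ∩ S ⁻¹' {i}) ≠ 0 → condMean μ (A ∩ S ⁻¹' {i}) f = c) :
    condMean μ A f = c := by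
  rw [condMean, ← measureReal_def, inv_mul_eq_iff_eq_mul₀ ((measureReal_ne_zero_iff).2 hA),
    setIntegral_eq_sum_inter_preimage hS hf, measureReal_eq_sum_inter_preimage hS,
    Finset.sum_mul]
  exact Finset.sum_congr rfl fun i _ => setIntegral_eq_measureReal_mul_of_condMean_eq (hcell i)

end

theorem total_effect_identification_general
    {Ω : Type*} [MeasurableSpace Ω] (P : Measure Ω) [IsProbabilityMeasure P]
    {H : Type*} [Zero H]
    (D : Ω → Fin 2) (h : Ω → H) (S : Ω → Fin 2)
    (Y : Fin 2 → Fin 2 → H → Ω → ℝ)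
    (hSmeas : Measurable S)
    -- spillovers are local: unexposed outside the spillover region
    (hLocal : ∀ ω, S ω = 0 → h ω = 0)
    (hD1 : 0 < P {ω | D ω = 1})
    (hD0S0 : 0 < P {ω | D ω = 0 ∧ S ω = 0})
    -- integrability of all random variables appearing in the stated expectations
    (hIntArm : ∀ (t d : Fin 2) (e : H), Integrable (Y t d e) P)
    (hIntObs : ∀ t : Fin 2, Integrable (fun ω => Y t (D ω) (h ω) ω) P)
    (hIntExp : ∀ d : Fin 2, Integrable (fun ω => Y 1 d (h ω) ω) P)
    -- No Anticipation
    (hNoAnt : ∀ (d : Fin 2) (e : H) (ω : Ω), Y 0 d e ω = Y 0 0 0 ω)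
    -- Cell Parallel Trends
    (hPT : ∀ d s : Fin 2, 0 < P {ω | D ω = d ∧ S ω = s} →
        condMean P {ω | D ω = d ∧ S ω = s} (fun ω => Y 1 0 0 ω - Y 0 0 0 ω)
        = ∫ ω, (Y 1 0 0 ω - Y 0 0 0 ω) ∂P) :
    condMean P {ω | D ω = 1} (fun ω => Y 1 (D ω) (h ω) ω - Y 0 (D ω) (h ω) ω)
      - condMean P {ω | D ω = 0 ∧ S ω = 0}
          (fun ω => Y 1 (D ω) (h ω) ω - Y 0 (D ω) (h ω) ω)
    = condMean P {ω | D ω = 1} (fun ω => Y 1 1 (h ω) ω - Y 1 0 0 ω) := by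
  have hObs : Integrable (fun ω => Y 1 (D ω) (h ω) ω - Y 0 (D ω) (h ω) ω) P :=
    (hIntObs 1).sub (hIntObs 0)
  have hTrend : Integrable (fun ω => Y 1 0 0 ω - Y 0 0 0 ω) P :=
    (hIntArm 1 0 0).sub (hIntArm 0 0 0)
  have hEffect : Integrable (fun ω => Y 1 1 (h ω) ω - Y 1 0 0 ω) P :=
    (hIntExp 1).sub (hIntArm 1 0 0)
  have hControl : condMean P {ω | D ω = 0 ∧ S ω = 0}
      (fun ω => Y 1 (D ω) (h ω) ω - Y 0 (D ω) (h ω) ω) = ∫ ω, (Y 1 0 0 ω - Y 0 0 0 ω) ∂P := by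
    rw [← hPT 0 0 hD0S0]
    refine condMean_congr hObs.1.restrict hTrend.1.restrict fun ω (hω : D ω = 0 ∧ S ω = 0) => ?_
    simp only [hω.1, hLocal ω hω.2]
  have hTreatedTrend : condMean P {ω | D ω = 1} (fun ω => Y 1 0 0 ω - Y 0 0 0 ω)
      = ∫ ω, (Y 1 0 0 ω - Y 0 0 0 ω) ∂P :=
    condMean_eq_of_forall_condMean_inter_preimage_eq hSmeas hD1.ne' hTrend.integrableOn
      fun s hs => hPT 1 s (pos_iff_ne_zero.2 hs)
  have hTreated : condMean P {ω | D ω = 1} (fun ω => Y 1 (D ω) (h ω) ω - Y 0 (D ω) (h ω) ω)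
      = condMean P {ω | D ω = 1} (fun ω => Y 1 1 (h ω) ω - Y 1 0 0 ω)
        + condMean P {ω | D ω = 1} (fun ω => Y 1 0 0 ω - Y 0 0 0 ω) := by
    rw [← condMean_add hEffect.integrableOn hTrend.integrableOn]
    refine condMean_congr hObs.1.restrict (hEffect.add hTrend).1.restrict fun ω (hD : D ω = 1) => ?_
    simp only [hD, hNoAnt 1 (h ω) ω]
    ring
  rw [hTreated, hControl, hTreatedTrend, add_sub_cancel_right]

/-- Identification of the total effect using far-away (unexposed) control units. -/
theorem total_effect_identification
    {Ω : Type*} [MeasurableSpace Ω] (P : Measure Ω) [IsProbabilityMeasure P]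
    {H : Type*} [Zero H]
    (D : Ω → Fin 2) (h : Ω → H) (S : Ω → Fin 2)
    (Y : Fin 2 → Fin 2 → H → Ω → ℝ)
    (hSmeas : Measurable S)
    -- spillovers are local: unexposed outside the spillover region
    (hLocal : ∀ ω, S ω = 0 → h ω = 0)
    (hD1 : 0 < P {ω | D ω = 1}) (hD0 : 0 < P {ω | D ω = 0})
    (hD0S0 : 0 < P {ω | D ω = 0 ∧ S ω = 0})
    -- integrability of all random variables appearing in the stated expectations
    (hIntArm : ∀ (t d : Fin 2) (e : H), Integrable (Y t d e) P)
    (hIntObs : ∀ t : Fin 2, Integrable (fun ω => Y t (D ω) (h ω) ω) P)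
    (hIntExp : ∀ d : Fin 2, Integrable (fun ω => Y 1 d (h ω) ω) P)
    -- No Anticipation
    (hNoAnt : ∀ (d : Fin 2) (e : H) (ω : Ω), Y 0 d e ω = Y 0 0 0 ω)
    -- Cell Parallel Trends
    (hPT : ∀ d s : Fin 2, 0 < P {ω | D ω = d ∧ S ω = s} →
        condMean P {ω | D ω = d ∧ S ω = s} (fun ω => Y 1 0 0 ω - Y 0 0 0 ω)
        = ∫ ω, (Y 1 0 0 ω - Y 0 0 0 ω) ∂P) :
    condMean P {ω | D ω = 1} (fun ω => Y 1 (D ω) (h ω) ω - Y 0 (D ω) (h ω) ω)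
      - condMean P {ω | D ω = 0 ∧ S ω = 0}
          (fun ω => Y 1 (D ω) (h ω) ω - Y 0 (D ω) (h ω) ω)
    = condMean P {ω | D ω = 1} (fun ω => Y 1 1 (h ω) ω - Y 1 0 0 ω) :=
  total_effect_identification_general P D h S Y hSmeas hLocal hD1 hD0S0 hIntArm hIntObs hIntExp
    hNoAnt hPT
end

section
/- Identification of the Direct Effect: suppose S : Ω → {0,1} is a measurable spillover-region indicator satisfying locality (S(ω) = 0 implies h(ω) = 0), with P(D=1, S=0) > 0 and P(D=0, S=0) > 0. If No Anticipation, Cell Parallel Trends, and Homogeneity of the Direct Effect across S hold, then E[Y_1^obs − Y_0^obs | D=1, S=0] − E[Y_1^obs − Y_0^obs | D=0, S=0] = τ_direct. -/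
open MeasureTheory

/-- Set integral of an a.e. strongly measurable function vanishing pointwise on the
(possibly non-measurable) set `A` is zero. -/
lemma mySetIntegral_eq_zero {Ω : Type*} [MeasurableSpace Ω] (P : Measure Ω)
    (A : Set Ω) (f : Ω → ℝ) (hf : AEStronglyMeasurable f P)
    (h0 : ∀ ω ∈ A, f ω = 0) : ∫ ω in A, f ω ∂P = 0 := by
  obtain ⟨g, hg, hfg⟩ := hf
  have hfg' : f =ᵐ[P.restrict A] g :=
    hfg.filter_mono (ae_mono Measure.restrict_le_self)
  rw [integral_congr_ae hfg']
  have hmeas : MeasurableSet {x | g x ≠ 0} :=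
    (hg.measurable (measurableSet_singleton (0:ℝ))).compl
  have hnull : P.restrict A {x | g x ≠ 0} = 0 := by
    rw [Measure.restrict_apply hmeas]
    refine measure_mono_null ?_ (ae_iff.mp hfg)
    rintro x ⟨hx1, hx2⟩
    simp only [Set.mem_setOf_eq]
    intro hxeq
    exact hx1 (hxeq ▸ h0 x hx2)
  have hg0 : g =ᵐ[P.restrict A] 0 := by
    rw [Filter.EventuallyEq, ae_iff]
    simpa using hnull
  rw [integral_congr_ae hg0]
  simp

/-- Identification of the direct effect under No Anticipation, Cell Parallel Trends,
and homogeneity of the direct effect across the spillover-region indicator. -/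
theorem direct_effect_identification
    {Ω : Type*} [MeasurableSpace Ω] (P : Measure Ω) [IsProbabilityMeasure P]
    {H : Type*} [Zero H]
    (D : Ω → Fin 2) (h : Ω → H) (S : Ω → Fin 2)
    (Y : Fin 2 → Fin 2 → H → Ω → ℝ)
    (hSmeas : Measurable S)
    -- spillovers are local: unexposed outside the spillover region
    (hLocal : ∀ ω, S ω = 0 → h ω = 0)
    (hD1 : 0 < P {ω | D ω = 1}) (hD0 : 0 < P {ω | D ω = 0})
    (hD1S0 : 0 < P {ω | D ω = 1 ∧ S ω = 0})
    (hD0S0 : 0 < P {ω | D ω = 0 ∧ S ω = 0})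
    -- integrability of all random variables appearing in the stated expectations
    (hIntArm : ∀ (t d : Fin 2) (e : H), Integrable (Y t d e) P)
    (hIntObs : ∀ t : Fin 2, Integrable (fun ω => Y t (D ω) (h ω) ω) P)
    -- No Anticipation
    (hNoAnt : ∀ (d : Fin 2) (e : H) (ω : Ω), Y 0 d e ω = Y 0 0 0 ω)
    -- Cell Parallel Trends
    (hPT : ∀ d s : Fin 2, 0 < P {ω | D ω = d ∧ S ω = s} →
        condMean P {ω | D ω = d ∧ S ω = s} (fun ω => Y 1 0 0 ω - Y 0 0 0 ω)
        = ∫ ω, (Y 1 0 0 ω - Y 0 0 0 ω) ∂P)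
    -- Homogeneity of the direct effect across S
    (hHom : ∀ s : Fin 2, 0 < P {ω | D ω = 1 ∧ S ω = s} →
        condMean P {ω | D ω = 1 ∧ S ω = s} (fun ω => Y 1 1 0 ω - Y 1 0 0 ω)
        = condMean P {ω | D ω = 1} (fun ω => Y 1 1 0 ω - Y 1 0 0 ω)) :
    condMean P {ω | D ω = 1 ∧ S ω = 0}
        (fun ω => Y 1 (D ω) (h ω) ω - Y 0 (D ω) (h ω) ω)
      - condMean P {ω | D ω = 0 ∧ S ω = 0}
          (fun ω => Y 1 (D ω) (h ω) ω - Y 0 (D ω) (h ω) ω)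
    = condMean P {ω | D ω = 1} (fun ω => Y 1 1 0 ω - Y 1 0 0 ω) := by
  set A1 : Set Ω := {ω | D ω = 1 ∧ S ω = 0} with hA1
  set A0 : Set Ω := {ω | D ω = 0 ∧ S ω = 0} with hA0
  -- integrable pieces
  have hIg : Integrable (fun ω => Y 1 0 0 ω - Y 0 0 0 ω) P :=
    (hIntArm 1 0 0).sub (hIntArm 0 0 0)
  have hIu : Integrable (fun ω => Y 1 (D ω) (h ω) ω - Y 1 0 0 ω) P :=
    (hIntObs 1).sub (hIntArm 1 0 0)
  have hIΔ : Integrable (fun ω => Y 1 1 0 ω - Y 1 0 0 ω) P :=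
    (hIntArm 1 1 0).sub (hIntArm 1 0 0)
  -- pointwise decomposition of the observed difference (uses No Anticipation only)
  have hfun : (fun ω => Y 1 (D ω) (h ω) ω - Y 0 (D ω) (h ω) ω)
      = fun ω => (Y 1 0 0 ω - Y 0 0 0 ω) + (Y 1 (D ω) (h ω) ω - Y 1 0 0 ω) := by
    funext ω
    rw [hNoAnt (D ω) (h ω) ω]
    ring
  -- splitting the conditional mean over any set
  have hsplit : ∀ A : Set Ω,
      condMean P A (fun ω => Y 1 (D ω) (h ω) ω - Y 0 (D ω) (h ω) ω)
      = condMean P A (fun ω => Y 1 0 0 ω - Y 0 0 0 ω)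
        + (P A).toReal⁻¹ * ∫ ω in A, (Y 1 (D ω) (h ω) ω - Y 1 0 0 ω) ∂P := by
    intro A
    rw [hfun]
    unfold condMean
    rw [integral_add (hIg.mono_measure Measure.restrict_le_self)
      (hIu.mono_measure Measure.restrict_le_self)]
    ring
  -- on A1, the second piece equals the direct-effect contrast
  have h1 : ∫ ω in A1, (Y 1 (D ω) (h ω) ω - Y 1 0 0 ω) ∂P
      = ∫ ω in A1, (Y 1 1 0 ω - Y 1 0 0 ω) ∂P := by
    have hzero : ∫ ω in A1,
        ((Y 1 (D ω) (h ω) ω - Y 1 0 0 ω) - (Y 1 1 0 ω - Y 1 0 0 ω)) ∂P = 0 := by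
      refine mySetIntegral_eq_zero P A1 _ (hIu.sub hIΔ).aestronglyMeasurable ?_
      rintro ω ⟨hd, hs⟩
      rw [hd, hLocal ω hs]
      ring
    rw [integral_sub (hIu.mono_measure Measure.restrict_le_self)
      (hIΔ.mono_measure Measure.restrict_le_self)] at hzero
    linarith
  -- on A0, the second piece vanishes
  have h0 : ∫ ω in A0, (Y 1 (D ω) (h ω) ω - Y 1 0 0 ω) ∂P = 0 := by
    refine mySetIntegral_eq_zero P A0 _ hIu.aestronglyMeasurable ?_
    rintro ω ⟨hd, hs⟩
    rw [hd, hLocal ω hs]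
    ring
  have hPT1 := hPT 1 0 hD1S0
  have hPT0 := hPT 0 0 hD0S0
  have hHom0 := hHom 0 hD1S0
  rw [hsplit A1, hsplit A0, h1, h0, hPT1, hPT0]
  rw [← hHom0]
  unfold condMean
  ring
end

section
/- Identification of the average spillover effect on exposed control units (the population coefficient γ_0 in the modified two-way fixed-effects model): suppose S : Ω → {0,1} is a measurable spillover-region indicator satisfying locality (S(ω) = 0 implies h(ω) = 0), with P(D=0, S=1) > 0 and P(D=0, S=0) > 0. If No Anticipation and Cell Parallel Trends hold, then E[Y_1^obs − Y_0^obs | D=0, S=1] − E[Y_1^obs − Y_0^obs | D=0, S=0] = E[Y_1(0, h(·))(·) − Y_1(0,0)(·) | D=0, S=1]. -/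
open MeasureTheory

/-- Two `P`-a.e. strongly measurable functions that agree pointwise on an arbitrary
set `s` agree `P.restrict s`-almost everywhere. -/
lemma eqOn_ae_restrict' {Ω : Type*} [MeasurableSpace Ω] {μ : Measure Ω} {s : Set Ω}
    {f g : Ω → ℝ} (hf : AEStronglyMeasurable f μ) (hg : AEStronglyMeasurable g μ)
    (hfg : ∀ ω ∈ s, f ω = g ω) : f =ᵐ[μ.restrict s] g := by
  have hfr : f =ᵐ[μ.restrict s] hf.mk f := ae_restrict_of_ae hf.ae_eq_mk
  have hgr : g =ᵐ[μ.restrict s] hg.mk g := ae_restrict_of_ae hg.ae_eq_mk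
  have hE : MeasurableSet {ω | hf.mk f ω = hg.mk g ω} :=
    measurableSet_eq_fun hf.measurable_mk hg.measurable_mk
  have hmid : hf.mk f =ᵐ[μ.restrict s] hg.mk g := by
    rw [Filter.EventuallyEq, ae_iff, ← Set.compl_setOf, Measure.restrict_apply hE.compl]
    refine measure_mono_null ?_
      (measure_union_null (ae_iff.mp hf.ae_eq_mk) (ae_iff.mp hg.ae_eq_mk))
    rintro x ⟨hx, hxs⟩
    by_contra hc
    push_neg at hc
    simp only [Set.mem_union, Set.mem_setOf_eq, not_or, not_not] at hc ⊢
    exact hx (show hf.mk f x = hg.mk g x by rw [← hc.1, ← hc.2]; exact hfg x hxs)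
  exact hfr.trans (hmid.trans hgr.symm)

/-- Identification of the average spillover effect on exposed control units
(the population coefficient `γ_0` in the modified TWFE model). -/
theorem spillover_on_control_identification
    {Ω : Type*} [MeasurableSpace Ω] (P : Measure Ω) [IsProbabilityMeasure P]
    {H : Type*} [Zero H]
    (D : Ω → Fin 2) (h : Ω → H) (S : Ω → Fin 2)
    (Y : Fin 2 → Fin 2 → H → Ω → ℝ)
    (hSmeas : Measurable S)
    -- spillovers are local: unexposed outside the spillover region
    (hLocal : ∀ ω, S ω = 0 → h ω = 0)
    (hD1 : 0 < P {ω | D ω = 1}) (hD0 : 0 < P {ω | D ω = 0})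
    (hD0S1 : 0 < P {ω | D ω = 0 ∧ S ω = 1})
    (hD0S0 : 0 < P {ω | D ω = 0 ∧ S ω = 0})
    -- integrability of all random variables appearing in the stated expectations
    (hIntArm : ∀ (t d : Fin 2) (e : H), Integrable (Y t d e) P)
    (hIntObs : ∀ t : Fin 2, Integrable (fun ω => Y t (D ω) (h ω) ω) P)
    (hIntExp : ∀ d : Fin 2, Integrable (fun ω => Y 1 d (h ω) ω) P)
    -- No Anticipation
    (hNoAnt : ∀ (d : Fin 2) (e : H) (ω : Ω), Y 0 d e ω = Y 0 0 0 ω)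
    -- Cell Parallel Trends
    (hPT : ∀ d s : Fin 2, 0 < P {ω | D ω = d ∧ S ω = s} →
        condMean P {ω | D ω = d ∧ S ω = s} (fun ω => Y 1 0 0 ω - Y 0 0 0 ω)
        = ∫ ω, (Y 1 0 0 ω - Y 0 0 0 ω) ∂P) :
    condMean P {ω | D ω = 0 ∧ S ω = 1}
        (fun ω => Y 1 (D ω) (h ω) ω - Y 0 (D ω) (h ω) ω)
      - condMean P {ω | D ω = 0 ∧ S ω = 0}
          (fun ω => Y 1 (D ω) (h ω) ω - Y 0 (D ω) (h ω) ω)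
    = condMean P {ω | D ω = 0 ∧ S ω = 1} (fun ω => Y 1 0 (h ω) ω - Y 1 0 0 ω) := by
  have I10h := hIntExp 0
  have I100 := hIntArm 1 0 0
  have I000 := hIntArm 0 0 0
  have Iobs : Integrable (fun ω => Y 1 (D ω) (h ω) ω - Y 0 (D ω) (h ω) ω) P :=
    (hIntObs 1).sub (hIntObs 0)
  have hPT1 := hPT 0 1 hD0S1
  have hPT0 := hPT 0 0 hD0S0
  have hB : ∫ ω in {ω | D ω = 0 ∧ S ω = 1}, (Y 1 (D ω) (h ω) ω - Y 0 (D ω) (h ω) ω) ∂P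
      = ∫ ω in {ω | D ω = 0 ∧ S ω = 1}, (Y 1 0 (h ω) ω - Y 1 0 0 ω) ∂P
        + ∫ ω in {ω | D ω = 0 ∧ S ω = 1}, (Y 1 0 0 ω - Y 0 0 0 ω) ∂P := by
    have J1 : Integrable (fun ω => Y 1 0 (h ω) ω - Y 1 0 0 ω)
        (P.restrict {ω | D ω = 0 ∧ S ω = 1}) := (I10h.restrict).sub (I100.restrict)
    have J2 : Integrable (fun ω => Y 1 0 0 ω - Y 0 0 0 ω)
        (P.restrict {ω | D ω = 0 ∧ S ω = 1}) := (I100.restrict).sub (I000.restrict)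
    rw [← integral_add J1 J2]
    apply integral_congr_ae
    refine eqOn_ae_restrict' Iobs.aestronglyMeasurable
      (((I10h.sub I100).add (I100.sub I000)).aestronglyMeasurable) ?_
    intro ω hω
    have hd : D ω = 0 := hω.1
    rw [hd, hNoAnt 0 (h ω) ω]
    ring
  have hC : ∫ ω in {ω | D ω = 0 ∧ S ω = 0}, (Y 1 (D ω) (h ω) ω - Y 0 (D ω) (h ω) ω) ∂P
      = ∫ ω in {ω | D ω = 0 ∧ S ω = 0}, (Y 1 0 0 ω - Y 0 0 0 ω) ∂P := by
    apply integral_congr_ae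
    refine eqOn_ae_restrict' Iobs.aestronglyMeasurable
      ((I100.sub I000).aestronglyMeasurable) ?_
    intro ω hω
    have hd : D ω = 0 := hω.1
    have hh : h ω = 0 := hLocal ω hω.2
    rw [hd, hh, hNoAnt 0 0 ω]
  simp only [condMean] at hPT1 hPT0 ⊢
  rw [hB, hC, mul_add]
  linarith [hPT1, hPT0]
end

section
/- Sufficient conditions for Switching-Effect Parallel Trends: fix h̄ ∈ H with P(D=1, h=h̄) > 0 and P(D=0, h=h̄) > 0. If (a) exposure-conditional parallel trends hold, E[Y_1(0,0) − Y_0(0,0) | D=1, h=h̄] = E[Y_1(0,0) − Y_0(0,0) | D=0, h=h̄], and (b) average spillover effects on untreated potential outcomes at exposure h̄ are equal between treated and control groups, E[Y_1(0,h̄) − Y_1(0,0) | D=1, h=h̄] = E[Y_1(0,h̄) − Y_1(0,0) | D=0, h=h̄], then Switching-Effect Parallel Trends holds at h̄: E[Y_1(0,h̄) − Y_0(0,0) | D=1, h=h̄] = E[Y_1(0,h̄) − Y_0(0,0) | D=0, h=h̄]. -/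
open MeasureTheory

lemma condMean_split {Ω : Type*} [MeasurableSpace Ω] (P : Measure Ω)
    (A : Set Ω) (a b c : Ω → ℝ) (hab : Integrable a P) (hbb : Integrable b P)
    (hcb : Integrable c P) :
    condMean P A (fun ω => a ω - c ω)
      = condMean P A (fun ω => a ω - b ω) + condMean P A (fun ω => b ω - c ω) := by
  unfold condMean
  have h1 : (fun ω => a ω - c ω) = fun ω => (a ω - b ω) + (b ω - c ω) := by
    funext ω; ring
  have i1 : Integrable (fun ω => a ω - b ω) P := hab.sub hbb
  have i2 : Integrable (fun ω => b ω - c ω) P := hbb.sub hcb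
  rw [h1, integral_add i1.restrict i2.restrict, mul_add]

/-- Exposure-conditional parallel trends together with equality of average spillover
effects on untreated potential outcomes imply Switching-Effect Parallel Trends. -/
theorem switching_parallel_trends_sufficient_conditions
    {Ω : Type*} [MeasurableSpace Ω] (P : Measure Ω) [IsProbabilityMeasure P]
    {H : Type*} [Zero H]
    (D : Ω → Fin 2) (h : Ω → H)
    (Y : Fin 2 → Fin 2 → H → Ω → ℝ)
    (hbar : H)
    (hD1 : 0 < P {ω | D ω = 1 ∧ h ω = hbar})
    (hD0 : 0 < P {ω | D ω = 0 ∧ h ω = hbar})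
    -- integrability of all random variables appearing in the stated expectations
    (hIntArm : ∀ (t d : Fin 2) (e : H), Integrable (Y t d e) P)
    -- (a) exposure-conditional parallel trends
    (ha : condMean P {ω | D ω = 1 ∧ h ω = hbar} (fun ω => Y 1 0 0 ω - Y 0 0 0 ω)
        = condMean P {ω | D ω = 0 ∧ h ω = hbar} (fun ω => Y 1 0 0 ω - Y 0 0 0 ω))
    -- (b) equal average spillover effects on untreated potential outcomes at hbar
    (hb : condMean P {ω | D ω = 1 ∧ h ω = hbar} (fun ω => Y 1 0 hbar ω - Y 1 0 0 ω)
        = condMean P {ω | D ω = 0 ∧ h ω = hbar} (fun ω => Y 1 0 hbar ω - Y 1 0 0 ω)) :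
    condMean P {ω | D ω = 1 ∧ h ω = hbar} (fun ω => Y 1 0 hbar ω - Y 0 0 0 ω)
    = condMean P {ω | D ω = 0 ∧ h ω = hbar} (fun ω => Y 1 0 hbar ω - Y 0 0 0 ω) := by
  rw [condMean_split P _ _ (Y 1 0 0) _ (hIntArm 1 0 hbar) (hIntArm 1 0 0) (hIntArm 0 0 0),
    condMean_split P _ _ (Y 1 0 0) _ (hIntArm 1 0 hbar) (hIntArm 1 0 0) (hIntArm 0 0 0),
    ha, hb]
end

section
/- Unbiasedness of the imputation estimand in the staggered setting: fix a period t with P(D_t = 1) > 0. Under the staggered parallel-trends model Y_t(0,0)(ω) = μ(ω) + λ_t + ε_t(ω) with E[ε_t · 1{D_t = 1}] = 0, the residualized observed outcome averaged over treated observations identifies the period-t total effect: E[Y_t^obs − μ − λ_t | D_t = 1] = E[Y_t(1, h_t(·))(·) − Y_t(0,0)(·) | D_t = 1]. -/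
open MeasureTheory

/-- Unbiasedness of the imputation estimand in the staggered-adoption setting:
the residualized observed outcome averaged over treated observations identifies
the period-t total effect. -/
theorem staggered_imputation_identifies_total_effect
    {Ω : Type*} [MeasurableSpace Ω] (P : Measure Ω) [IsProbabilityMeasure P]
    {H : Type*} [Zero H] {T : Type*} [Fintype T]
    (D : T → Ω → Fin 2) (h : T → Ω → H)
    (Y : T → Fin 2 → H → Ω → ℝ)
    (μ : Ω → ℝ) (lam : T → ℝ) (ε : T → Ω → ℝ)
    (t : T)
    (hDt : 0 < P {ω | D t ω = 1})
    -- integrability of all random variables appearing in the stated expectations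
    (hIntArm : ∀ (d : Fin 2) (e : H), Integrable (Y t d e) P)
    (hIntObs : Integrable (fun ω => Y t (D t ω) (h t ω) ω) P)
    (hIntExp : Integrable (fun ω => Y t 1 (h t ω) ω) P)
    (hIntμ : Integrable μ P) (hIntε : Integrable (ε t) P)
    -- staggered parallel-trends model for untreated, unexposed outcomes
    (hModel : ∀ (s : T) (ω : Ω), Y s 0 0 ω = μ ω + lam s + ε s ω)
    -- the error term is mean-zero over treated observations: E[ε_t · 1{D_t = 1}] = 0
    (hOrth : ∫ ω in {ω | D t ω = 1}, ε t ω ∂P = 0) :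
    condMean P {ω | D t ω = 1} (fun ω => Y t (D t ω) (h t ω) ω - μ ω - lam t)
    = condMean P {ω | D t ω = 1} (fun ω => Y t 1 (h t ω) ω - Y t 0 0 ω) := by
  set A : Set Ω := {ω | D t ω = 1} with hA
  unfold condMean
  congr 1
  set k : Ω → ℝ := fun ω => Y t (D t ω) (h t ω) ω - Y t 1 (h t ω) ω with hk
  have hkint : Integrable k P := hIntObs.sub hIntExp
  have hkm : AEStronglyMeasurable k P := hkint.1
  have hkA : ∀ ω ∈ A, k ω = 0 := by
    intro ω hω
    simp only [hk]
    rw [show D t ω = 1 from hω, sub_self]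
  -- the set integral of k over A vanishes
  have hk0 : ∫ ω in A, k ω ∂P = 0 := by
    have hmk : k =ᵐ[P] hkm.mk k := hkm.ae_eq_mk
    have h2 : k =ᵐ[P.restrict A] hkm.mk k := ae_restrict_of_ae hmk
    have h3 : hkm.mk k =ᵐ[P.restrict A] (fun _ => (0 : ℝ)) := by
      rw [Filter.EventuallyEq, ae_iff]
      have hms : MeasurableSet {ω | ¬ hkm.mk k ω = (0 : ℝ)} := by
        have := hkm.stronglyMeasurable_mk.measurable
        exact (this (measurableSet_singleton (0 : ℝ))).compl
      rw [Measure.restrict_apply hms]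
      refine measure_mono_null (fun ω hω => ?_) (ae_iff.mp hmk)
      obtain ⟨h1, h2'⟩ := hω
      simp only [Set.mem_setOf_eq] at h1 ⊢
      intro heq
      exact h1 (heq ▸ (hkA ω h2'))
    have : k =ᵐ[P.restrict A] (fun _ => (0 : ℝ)) := h2.trans h3
    rw [integral_congr_ae this, integral_zero]
  -- pointwise decomposition of the integrands
  have hfg : ∀ ω, Y t (D t ω) (h t ω) ω - μ ω - lam t
      = (Y t 1 (h t ω) ω - Y t 0 0 ω) + (ε t ω + k ω) := by
    intro ω
    rw [hModel t ω]
    simp only [hk]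
    ring
  calc ∫ ω in A, (Y t (D t ω) (h t ω) ω - μ ω - lam t) ∂P
      = ∫ ω in A, ((Y t 1 (h t ω) ω - Y t 0 0 ω) + (ε t ω + k ω)) ∂P := by
        exact integral_congr_ae (Filter.Eventually.of_forall hfg)
    _ = (∫ ω in A, (Y t 1 (h t ω) ω - Y t 0 0 ω) ∂P)
        + ∫ ω in A, (ε t ω + k ω) ∂P := by
        exact integral_add ((hIntExp.sub (hIntArm 0 0)).restrict)
          ((hIntε.add hkint).restrict)
    _ = ∫ ω in A, (Y t 1 (h t ω) ω - Y t 0 0 ω) ∂P := by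
        rw [integral_add hIntε.restrict hkint.restrict, hOrth, hk0]
        ring
end
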